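/- Let 0 < ω₁ < … < ω_p be real numbers. There exist ε₃ > 0 and C₃ > 0 (depending only on the ω_j) with the following property. Let T₀ ∈ (0,+∞], and for j = 1,…,p let α_j, β_j ∈ C¹([0,T₀), ℝ). Set γ(t) = √( Σ_{j=1}^p ω_j²α_j(t)² + β_j(t)² ) and assume ‖γ‖_∞ = sup_{t∈[0,T₀)} γ(t) < ∞, and for all j and all t ∈ [0,T₀): |α_j'(t) − β_j(t)| ≤ ε₃ γ(t) and |β_j'(t) − ω_j² α_j(t)| ≤ ε₃ γ(t). Then ∫₀^{T₀} γ(t) dt ≤ C₃ ‖γ‖_∞; moreover, if T₀ = +∞ then e^{(ω₁/2)t} γ(t) → 0 as t → +∞. -/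

import Mathlib

open MeasureTheory Real Filter Topology
open scoped ENNReal InnerProductSpace BigOperators

noncomputable section

/-- Points of `ℝ^N` (with its Euclidean structure and Lebesgue measure). -/
abbrev Pt (N : ℕ) : Type := EuclideanSpace ℝ (Fin N)

/-- Partial derivative in the `i`-th coordinate direction (pointwise). -/
def pdi {N : ℕ} (i : Fin N) (f : Pt N → ℝ) (x : Pt N) : ℝ :=
  fderiv ℝ f x (EuclideanSpace.single i 1)

/-- The Laplacian (pointwise). -/
def lap {N : ℕ} (f : Pt N → ℝ) (x : Pt N) : ℝ :=
  ∑ i : Fin N, pdi i (pdi i f) x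

/-- Smooth, compactly supported test functions. -/
def IsTest {N : ℕ} (φ : Pt N → ℝ) : Prop :=
  ContDiff ℝ (⊤ : ℕ∞) φ ∧ HasCompactSupport φ

/-- The critical exponent `4/(N-2)`. -/
def critExp (N : ℕ) : ℝ := 4 / ((N : ℝ) - 2)

/-- The exponent `2N/(N-2)`. -/
def critExp' (N : ℕ) : ℝ := 2 * (N : ℝ) / ((N : ℝ) - 2)

/-- Homogeneous `Ḣ¹` (semi)norm, computed from the pointwise differential. -/
def H1norm {N : ℕ} (f : Pt N → ℝ) : ℝ :=
  (eLpNorm (fun x => ‖fderiv ℝ f x‖) 2 volume).toReal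

/-- `L²`-norm. -/
def L2norm {N : ℕ} (f : Pt N → ℝ) : ℝ :=
  (eLpNorm f 2 volume).toReal

/-- Membership in `Ḣ¹(ℝ^N)` (`N ≥ 3`): we model `Ḣ¹` as the set of (everywhere
differentiable representatives of) functions in `L^{2N/(N-2)}` whose gradient is in `L²`. -/
def MemH1 {N : ℕ} (f : Pt N → ℝ) : Prop :=
  Differentiable ℝ f ∧ MemLp f (ENNReal.ofReal (critExp' N)) volume ∧
    MemLp (fun x => ‖fderiv ℝ f x‖) 2 volume

/-- `Q ∈ Σ`: the nonzero `Ḣ¹` distributional solutions of `-ΔQ = |Q|^{4/(N-2)} Q` on `ℝ^N`. -/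
def InSigma (N : ℕ) (Q : Pt N → ℝ) : Prop :=
  Q ≠ 0 ∧ MemH1 Q ∧
    ∀ φ : Pt N → ℝ, IsTest φ →
      (∫ x, Q x * lap φ x) = - ∫ x, |Q x| ^ critExp N * Q x * φ x

/-- `f ∈ Z_Q`: `f ∈ Ḣ¹` and `L_Q f = 0` in the sense of distributions, where
`L_Q = -Δ - ((N+2)/(N-2))|Q|^{4/(N-2)}` is the linearized operator at `Q`. -/
def InZ (N : ℕ) (Q f : Pt N → ℝ) : Prop :=
  MemH1 f ∧
    ∀ φ : Pt N → ℝ, IsTest φ →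
      (∫ x, f x * lap φ x)
        = - (((N : ℝ) + 2) / ((N : ℝ) - 2)) * ∫ x, |Q x| ^ critExp N * f x * φ x

/-- `L_Q Y = -ω² Y` in the sense of distributions. -/
def IsEigen (N : ℕ) (Q Y : Pt N → ℝ) (ω : ℝ) : Prop :=
  ∀ φ : Pt N → ℝ, IsTest φ →
    (∫ x, Y x * lap φ x)
      = ∫ x, (ω ^ 2 * Y x - ((N : ℝ) + 2) / ((N : ℝ) - 2) * |Q x| ^ critExp N * Y x) * φ x

/-- The generators of `Z̃_Q` coming from the invariances of the stationary equation. -/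
def tildeGens (N : ℕ) (Q : Pt N → ℝ) : Set (Pt N → ℝ) :=
  { g | (∃ j : Fin N, g = fun x : Pt N =>
            (2 - (N : ℝ)) * x j * Q x + ‖x‖ ^ 2 * pdi j Q x
              - 2 * x j * ∑ i : Fin N, x i * pdi i Q x) ∨
        (∃ j : Fin N, g = pdi j Q) ∨
        (∃ j k : Fin N, j < k ∧ g = fun x : Pt N => x j * pdi k Q x - x k * pdi j Q x) ∨
        g = fun x : Pt N => ((N : ℝ) - 2) / 2 * Q x + ∑ i : Fin N, x i * pdi i Q x }

/-- The nondegeneracy condition (ND): `Z_Q = Z̃_Q`. -/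
def NonDeg (N : ℕ) (Q : Pt N → ℝ) : Prop :=
  {f : Pt N → ℝ | InZ N Q f} = (Submodule.span ℝ (tildeGens N Q) : Set (Pt N → ℝ))

/-- Time derivative `∂_t u`. -/
def dtu {N : ℕ} (u : ℝ → Pt N → ℝ) (t : ℝ) (x : Pt N) : ℝ :=
  deriv (fun s => u s x) t

/-- The conserved energy of a pair `(f, g) ∈ Ḣ¹ × L²`. -/
def energyPair (N : ℕ) (f g : Pt N → ℝ) : ℝ :=
  (1 / 2) * (∫ x, ‖fderiv ℝ f x‖ ^ 2) + (1 / 2) * (∫ x, (g x) ^ 2)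
    - (((N : ℝ) - 2) / (2 * (N : ℝ))) * ∫ x, |f x| ^ critExp' N

/-- The conserved momentum of a pair `(f, g) ∈ Ḣ¹ × L²`. -/
def momentumPair (N : ℕ) (f g : Pt N → ℝ) : Pt N :=
  ∫ x, g x • gradient f x

/-- `u` is a (finite-energy) solution of the focusing energy-critical wave equation
`∂_t² u - Δu = |u|^{4/(N-2)} u` on the time interval `(Tm, Tp) ∋ 0`: the equation holds
in the sense of distributions on the spacetime strip, `(u, ∂_t u)` has finite energy at
each time and depends continuously (in `Ḣ¹ × L²`) on time. -/
structure IsSolOn (N : ℕ) (u : ℝ → Pt N → ℝ) (Tm Tp : EReal) : Prop where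
  lt_zero : Tm < (0 : EReal)
  zero_lt : (0 : EReal) < Tp
  reg : ∀ t : ℝ, Tm < (t : EReal) → (t : EReal) < Tp →
    MemH1 (u t) ∧ MemLp (dtu u t) 2 volume
  eq : ∀ φ : ℝ → Pt N → ℝ,
    ContDiff ℝ (⊤ : ℕ∞) (fun p : ℝ × Pt N => φ p.1 p.2) →
    HasCompactSupport (fun p : ℝ × Pt N => φ p.1 p.2) →
    (∀ t : ℝ, ¬ (Tm < (t : EReal) ∧ (t : EReal) < Tp) → φ t = 0) →
    (∫ t : ℝ, ∫ x : Pt N, u t x *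
        (deriv (fun s => deriv (fun r => φ r x) s) t - lap (φ t) x))
      = ∫ t : ℝ, ∫ x : Pt N, |u t x| ^ critExp N * u t x * φ t x
  cont : ∀ t₀ : ℝ, Tm < (t₀ : EReal) → (t₀ : EReal) < Tp → ∀ ε : ℝ, 0 < ε →
    ∃ δ : ℝ, 0 < δ ∧ ∀ t : ℝ, Tm < (t : EReal) → (t : EReal) < Tp → |t - t₀| < δ →
      H1norm (fun x => u t x - u t₀ x) + L2norm (fun x => dtu u t x - dtu u t₀ x) < ε

/-- `u` is a solution on its maximal interval of existence `(Tm, Tp)`. -/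
def IsMaxSol (N : ℕ) (u : ℝ → Pt N → ℝ) (Tm Tp : EReal) : Prop :=
  IsSolOn N u Tm Tp ∧
    ∀ (v : ℝ → Pt N → ℝ) (Tm' Tp' : EReal), IsSolOn N v Tm' Tp' →
      Tm' ≤ Tm → Tp ≤ Tp' →
      (∀ t : ℝ, Tm < (t : EReal) → (t : EReal) < Tp → v t = u t) →
      Tm' = Tm ∧ Tp' = Tp

/-- `u` is a nonzero solution. -/
def NonzeroSol (N : ℕ) (u : ℝ → Pt N → ℝ) (Tm Tp : EReal) : Prop :=
  ∃ (t : ℝ) (x : Pt N), Tm < (t : EReal) ∧ (t : EReal) < Tp ∧ u t x ≠ 0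

/-- The modulated pair
`(λ(t)^{N/2-1} u(t, λ(t)·+x(t)), λ(t)^{N/2} ∂_t u(t, λ(t)·+x(t)))`. -/
def modPair (N : ℕ) (u : ℝ → Pt N → ℝ) (lam : ℝ → ℝ) (c : ℝ → Pt N) (t : ℝ) :
    (Pt N → ℝ) × (Pt N → ℝ) :=
  (fun y => lam t ^ ((N : ℝ) / 2 - 1) * u t (lam t • y + c t),
   fun y => lam t ^ ((N : ℝ) / 2) * dtu u t (lam t • y + c t))

/-- Distance of two pairs in `Ḣ¹ × L²`. -/
def pairDist {N : ℕ} (P R : (Pt N → ℝ) × (Pt N → ℝ)) : ℝ :=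
  H1norm (fun x => P.1 x - R.1 x) + L2norm (fun x => P.2 x - R.2 x)

/-- The compactness property, with modulation parameters `lam, c`: every sequence of times
admits a subsequence along which the modulated pairs are Cauchy in `Ḣ¹ × L²`
(i.e. the modulated trajectory is totally bounded, equivalently precompact, in `Ḣ¹ × L²`). -/
def HasCP (N : ℕ) (u : ℝ → Pt N → ℝ) (Tm Tp : EReal) (lam : ℝ → ℝ) (c : ℝ → Pt N) : Prop :=
  (∀ t : ℝ, Tm < (t : EReal) → (t : EReal) < Tp → 0 < lam t) ∧
    ∀ tseq : ℕ → ℝ, (∀ n, Tm < (tseq n : EReal) ∧ (tseq n : EReal) < Tp) →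
      ∃ σ : ℕ → ℕ, StrictMono σ ∧
        ∀ ε : ℝ, 0 < ε → ∃ M : ℕ, ∀ i j : ℕ, M ≤ i → M ≤ j →
          pairDist (modPair N u lam c (tseq (σ i))) (modPair N u lam c (tseq (σ j))) < ε

/-- The solitary wave `Q_ℓ(t, x) = Q_ℓ(0, x - tℓ)`, the Lorentz transform of the
stationary solution `Q` with velocity `ℓ`, `|ℓ| < 1`. -/
def solWave (N : ℕ) (Q : Pt N → ℝ) (l : Pt N) (t : ℝ) (x : Pt N) : ℝ :=
  Q (((-t / Real.sqrt (1 - ‖l‖ ^ 2)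
      + 1 / ‖l‖ ^ 2 * (1 / Real.sqrt (1 - ‖l‖ ^ 2) - 1) * ⟪l, x⟫_ℝ) • l) + x)

/-- The ground state `W(x) = (1 + |x|²/(N(N-2)))^{-(N-2)/2}`. -/
def groundW (N : ℕ) (x : Pt N) : ℝ :=
  (1 + ‖x‖ ^ 2 / ((N : ℝ) * ((N : ℝ) - 2))) ^ (-(((N : ℝ) - 2) / 2))

/-- Distance (in `Ḣ¹`) to the set `Σ` of stationary solutions. -/
def distSigma (N : ℕ) (f : Pt N → ℝ) : ℝ :=
  sInf {r : ℝ | ∃ R : Pt N → ℝ, InSigma N R ∧ r = H1norm (fun x => f x - R x)}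

/-- The parameter space `ℝ^{N'}`, `N' = 2N + 1 + N(N-1)/2`, for the transformations `θ_A`:
a parameter is `A = (s, a, b, c)` where the rotation part `c` is recorded as the
(antisymmetric) matrix it generates. -/
abbrev ParamSpace (N : ℕ) : Type :=
  ℝ × Pt N × Pt N × Matrix (Fin N) (Fin N) ℝ

/-- The rotation part of the parameter is an antisymmetric matrix. -/
def IsSkewParam {N : ℕ} (A : ParamSpace N) : Prop :=
  A.2.2.2.transpose = -A.2.2.2

/-- The size `|A|` of a parameter `A ∈ ℝ^{N'}`. -/
def pnormA {N : ℕ} (A : ParamSpace N) : ℝ :=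
  |A.1| + ‖A.2.1‖ + ‖A.2.2.1‖ + Real.sqrt (∑ i : Fin N, ∑ j : Fin N, (A.2.2.2 i j) ^ 2)

/-- The transformation `θ_A`, `A = (s, a, b, c)`:
`θ_A(f)(x) = e^{(N-2)s/2} |x/|x| - a|x||^{2-N} f(b + e^s P_c (x - a|x|²)/(1 - 2⟨a,x⟩ + |a|²|x|²))`. -/
def theta {N : ℕ} (A : ParamSpace N) (f : Pt N → ℝ) (x : Pt N) : ℝ :=
  Real.exp (((N : ℝ) - 2) * A.1 / 2) * ‖‖x‖⁻¹ • x - ‖x‖ • A.2.1‖ ^ (2 - (N : ℝ)) *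
    f (A.2.2.1 + (1 - 2 * ⟪A.2.1, x⟫_ℝ + ‖A.2.1‖ ^ 2 * ‖x‖ ^ 2)⁻¹ •
        (Real.exp A.1 •
          (Matrix.toEuclideanLin (NormedSpace.exp A.2.2.2)) (x - ‖x‖ ^ 2 • A.2.1)))

/-- The adjoint `(θ_A^{-1})^*` of the inverse of `θ_A`:
`(θ_A^{-1})^*(g)(x) = e^{(N+2)s/2} |x/|x| - a|x||^{-(N+2)} g(b + e^s P_c (x - a|x|²)/(1 - 2⟨a,x⟩ + |a|²|x|²))`. -/
def thetaInvAdj {N : ℕ} (A : ParamSpace N) (g : Pt N → ℝ) (x : Pt N) : ℝ :=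
  Real.exp (((N : ℝ) + 2) * A.1 / 2) * ‖‖x‖⁻¹ • x - ‖x‖ • A.2.1‖ ^ (-((N : ℝ) + 2)) *
    g (A.2.2.1 + (1 - 2 * ⟪A.2.1, x⟫_ℝ + ‖A.2.1‖ ^ 2 * ‖x‖ ^ 2)⁻¹ •
        (Real.exp A.1 •
          (Matrix.toEuclideanLin (NormedSpace.exp A.2.2.2)) (x - ‖x‖ ^ 2 • A.2.1)))

/-- The map `ψ_a = J ∘ T_{-a} ∘ J : x ↦ (x - a|x|²)/(1 - 2⟨a,x⟩ + |a|²|x|²)`. -/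
def psiMap {N : ℕ} (a z : Pt N) : Pt N :=
  (1 - 2 * ⟪a, z⟫_ℝ + ‖a‖ ^ 2 * ‖z‖ ^ 2)⁻¹ • (z - ‖z‖ ^ 2 • a)

/-- The inverse transformation `θ_A^{-1} = Θ_{ψ_{-a} ∘ D_{e^{-s}} ∘ P_{-c} ∘ T_{-b}}`. -/
def thetaInv {N : ℕ} (A : ParamSpace N) (g : Pt N → ℝ) (y : Pt N) : ℝ :=
  Real.exp (-(((N : ℝ) - 2) * A.1 / 2)) *
    ‖‖(Real.exp (-A.1) •
          (Matrix.toEuclideanLin (NormedSpace.exp (-A.2.2.2))) (y - A.2.2.1))‖⁻¹ •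
        (Real.exp (-A.1) •
          (Matrix.toEuclideanLin (NormedSpace.exp (-A.2.2.2))) (y - A.2.2.1))
      - ‖(Real.exp (-A.1) •
          (Matrix.toEuclideanLin (NormedSpace.exp (-A.2.2.2))) (y - A.2.2.1))‖ •
        (-A.2.1)‖ ^ (2 - (N : ℝ)) *
    g (psiMap (-A.2.1)
        (Real.exp (-A.1) •
          (Matrix.toEuclideanLin (NormedSpace.exp (-A.2.2.2))) (y - A.2.2.1)))

/-- The Kelvin transform `Q̃(x) = |x|^{2-N} Q(x/|x|²)`. -/
def kelvin (N : ℕ) (Q : Pt N → ℝ) (x : Pt N) : ℝ :=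
  ‖x‖ ^ (2 - (N : ℝ)) * Q ((‖x‖ ^ 2)⁻¹ • x)

/-- The `H^{-1}`-norm, realized by duality against `H¹` test functions. -/
def Hm1norm (N : ℕ) (f : Pt N → ℝ) : ℝ :=
  sSup {r : ℝ | ∃ φ : Pt N → ℝ, IsTest φ ∧ L2norm φ + H1norm φ ≤ 1 ∧ r = ∫ x, f x * φ x}

/-- The quadratic form `Φ_Q(f) = ½∫|∇f|² - ((N+2)/(2(N-2)))∫|Q|^{4/(N-2)} f²` of `L_Q`. -/
def PhiQ (N : ℕ) (Q f : Pt N → ℝ) : ℝ :=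
  (1 / 2) * (∫ x, ‖fderiv ℝ f x‖ ^ 2)
    - (((N : ℝ) + 2) / (2 * ((N : ℝ) - 2))) * ∫ x, |Q x| ^ critExp N * (f x) ^ 2

/-- The standard spectral setup at a stationary solution `Q`:
`Y₁, …, Y_p` is an `L²`-orthonormal family of eigenfunctions of `L_Q` spanning all its
negative spectral subspaces, with eigenvalues `-ω₁² ≤ … ≤ -ω_p² < 0`; `Z₁, …, Z_m` is a
basis of the kernel `Z_Q`; and `E₁, …, E_m ∈ C₀^∞` satisfy `∫E_j Y_k = 0` and
`∫E_j Z_k = δ_{jk}`. -/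
structure SetupQ (N : ℕ) (Q : Pt N → ℝ) {p m : ℕ} (Y : Fin p → Pt N → ℝ)
    (omg : Fin p → ℝ) (Z : Fin m → Pt N → ℝ) (E : Fin m → Pt N → ℝ) : Prop where
  omg_pos : ∀ k, 0 < omg k
  omg_mono : ∀ j k, j ≤ k → omg j ≤ omg k
  Y_mem : ∀ k, MemLp (Y k) 2 volume
  Y_eigen : ∀ k, IsEigen N Q (Y k) (omg k)
  Y_ortho : ∀ j k, (∫ x, Y j x * Y k x) = if j = k then (1 : ℝ) else 0
  Y_span : ∀ (Y' : Pt N → ℝ) (w : ℝ), 0 < w → MemLp Y' 2 volume → IsEigen N Q Y' w →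
      Y' ∈ Submodule.span ℝ (Set.range Y)
  Z_mem : ∀ j, InZ N Q (Z j)
  Z_indep : LinearIndependent ℝ Z
  Z_span : ∀ f, InZ N Q f → f ∈ Submodule.span ℝ (Set.range Z)
  E_test : ∀ j, IsTest (E j)
  E_orthoY : ∀ j k, (∫ x, E j x * Y k x) = 0
  E_dualZ : ∀ j k, (∫ x, E j x * Z k x) = if j = k then (1 : ℝ) else 0


/-- The quantity `γ(t) = √(Σ_j ω_j² α_j(t)² + β_j(t)²)`. -/
def gam {p : ℕ} (omg : Fin p → ℝ) (α β : Fin p → ℝ → ℝ) (t : ℝ) : ℝ :=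
  Real.sqrt (∑ j : Fin p, ((omg j) ^ 2 * (α j t) ^ 2 + (β j t) ^ 2))


/-! With `ξ_j = ω_j α_j + β_j` and `η_j = ω_j α_j - β_j`, an exact solution satisfies
`ξ_j' = ω_j ξ_j` and `η_j' = -ω_j η_j`. For `ε₃` small the quantities `X = Σ ξ_j²` and
`Y = Σ η_j²`, with `X + Y = 2γ²`, still satisfy cone conditions at the rate `c = 3ω₁/2`:
`X - Y` grows like `e^{ct}`, so once `X ≥ Y` this persists and from then on `X` grows like
`e^{ct}`, while before that moment `Y` decays like `e^{-ct}`. As `X, Y ≤ 2‖γ‖²_∞`, this gives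
`γ(t)² ≲ ‖γ‖²_∞ (e^{-ct} + e^{-c(u-t)})` for all `t ≤ u < T₀`. Taking `u = (t + T₀)/2` when
`T₀ < ∞` and `u = 2t` when `T₀ = ∞` and integrating proves both claims. -/

theorem mul_exp_le_of_mul_le_deriv {S : Set ℝ} {f f' : ℝ → ℝ} {c s t : ℝ} (hS : Convex ℝ S)
    (hf : ∀ x ∈ S, HasDerivWithinAt f (f' x) S x) (hle : ∀ x ∈ S, c * f x ≤ f' x)
    (hs : s ∈ S) (ht : t ∈ S) (hst : s ≤ t) :
    f s * exp (c * (t - s)) ≤ f t := by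
  have hderiv : ∀ x ∈ S, HasDerivWithinAt (fun x => f x * exp (-(c * x)))
      (exp (-(c * x)) * (f' x - c * f x)) S x := fun x hx =>
    ((hf x hx).mul ((hasDerivAt_id' x).const_mul c).fun_neg.exp.hasDerivWithinAt).congr_deriv
      (by ring)
  have hmono : MonotoneOn (fun x => f x * exp (-(c * x))) S :=
    monotoneOn_of_hasDerivWithinAt_nonneg hS (fun x hx => (hderiv x hx).continuousWithinAt)
      (fun x hx => (hderiv x (interior_subset hx)).mono interior_subset)
      (fun x hx => mul_nonneg (exp_pos _).le (sub_nonneg.2 (hle x (interior_subset hx))))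
  calc f s * exp (c * (t - s))
      = f s * exp (-(c * s)) * exp (c * t) := by
        rw [mul_assoc, ← exp_add]; ring_nf
    _ ≤ f t * exp (-(c * t)) * exp (c * t) :=
        mul_le_mul_of_nonneg_right (hmono hs ht hst) (exp_pos _).le
    _ = f t := by rw [mul_assoc, ← exp_add]; simp

structure IsConeDichotomy (S : Set ℝ) (c : ℝ) (X Y X' Y' : ℝ → ℝ) : Prop where
  hasDerivWithinAt_fst : ∀ t ∈ S, HasDerivWithinAt X (X' t) S t
  hasDerivWithinAt_snd : ∀ t ∈ S, HasDerivWithinAt Y (Y' t) S t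
  mul_sub_le_deriv_sub : ∀ t ∈ S, c * (X t - Y t) ≤ X' t - Y' t
  deriv_snd_le : ∀ t ∈ S, X t ≤ Y t → Y' t ≤ -(c * Y t)
  le_deriv_fst : ∀ t ∈ S, Y t ≤ X t → c * X t ≤ X' t

namespace IsConeDichotomy

variable {S : Set ℝ} {c : ℝ} {X Y X' Y' : ℝ → ℝ} {s t : ℝ}

theorem of_le_deriv {a δ : ℝ} (hδ : 0 ≤ δ) (hδa : 2 * δ ≤ a)
    (hXd : ∀ t ∈ S, HasDerivWithinAt X (X' t) S t) (hYd : ∀ t ∈ S, HasDerivWithinAt Y (Y' t) S t)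
    (hY : ∀ t ∈ S, 0 ≤ Y t) (hX' : ∀ t ∈ S, a * X t - δ * (X t + Y t) ≤ X' t)
    (hY' : ∀ t ∈ S, a * Y t - δ * (X t + Y t) ≤ -Y' t) :
    IsConeDichotomy S (a - 2 * δ) X Y X' Y' where
  hasDerivWithinAt_fst := hXd
  hasDerivWithinAt_snd := hYd
  mul_sub_le_deriv_sub t ht := by
    nlinarith [hX' t ht, hY' t ht, mul_nonneg (sub_nonneg.2 hδa) (hY t ht)]
  deriv_snd_le t ht hXY := by nlinarith [hY' t ht, mul_le_mul_of_nonneg_left hXY hδ]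
  le_deriv_fst t ht hYX := by nlinarith [hX' t ht, mul_le_mul_of_nonneg_left hYX hδ]

theorem sub_mul_exp_le_sub (h : IsConeDichotomy S c X Y X' Y') (hS : Convex ℝ S)
    (hs : s ∈ S) (ht : t ∈ S) (hst : s ≤ t) :
    (X s - Y s) * exp (c * (t - s)) ≤ X t - Y t :=
  mul_exp_le_of_mul_le_deriv (f := fun x => X x - Y x) hS
    (fun x hx => (h.hasDerivWithinAt_fst x hx).sub (h.hasDerivWithinAt_snd x hx))
    h.mul_sub_le_deriv_sub hs ht hst

theorem fst_le_snd_of_fst_le_snd (h : IsConeDichotomy S c X Y X' Y') (hS : Convex ℝ S)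
    (hs : s ∈ S) (ht : t ∈ S) (hst : s ≤ t) (hXY : X t ≤ Y t) : X s ≤ Y s := by
  have := h.sub_mul_exp_le_sub hS hs ht hst
  have := nonpos_of_mul_nonpos_left (this.trans (sub_nonpos.2 hXY)) (exp_pos _)
  linarith

theorem snd_le_mul_exp (h : IsConeDichotomy S c X Y X' Y') (hS : Convex ℝ S)
    (hs : s ∈ S) (ht : t ∈ S) (hst : s ≤ t) (hXY : X t ≤ Y t) :
    Y t ≤ Y s * exp (-c * (t - s)) := by
  have := mul_exp_le_of_mul_le_deriv (f := fun x => -Y x) (f' := fun x => -Y' x) (c := -c)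
    (hS.inter (convex_Iic t))
    (fun x hx => ((h.hasDerivWithinAt_snd x hx.1).mono Set.inter_subset_left).neg)
    (fun x hx => by
      have := h.deriv_snd_le x hx.1 (h.fst_le_snd_of_fst_le_snd hS hx.1 ht hx.2 hXY)
      linarith)
    ⟨hs, hst⟩ ⟨ht, Set.self_mem_Iic⟩ hst
  linarith

theorem fst_le_mul_exp (h : IsConeDichotomy S c X Y X' Y') (hS : Convex ℝ S)
    (hs : s ∈ S) (ht : t ∈ S) (hst : s ≤ t) (hXY : Y s ≤ X s) :
    X s ≤ X t * exp (-c * (t - s)) := by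
  have := mul_exp_le_of_mul_le_deriv (hS.inter (convex_Ici s))
    (fun x hx => (h.hasDerivWithinAt_fst x hx.1).mono Set.inter_subset_left)
    (fun x hx => h.le_deriv_fst x hx.1 (by
      have := mul_nonneg (sub_nonneg.2 hXY) (exp_pos (c * (x - s))).le
      linarith [h.sub_mul_exp_le_sub hS hs hx.1 hx.2]))
    ⟨hs, Set.self_mem_Ici⟩ ⟨ht, hst⟩ hst
  calc X s = X s * exp (c * (t - s)) * exp (-c * (t - s)) := by
        rw [mul_assoc, ← exp_add]; simp
    _ ≤ X t * exp (-c * (t - s)) := mul_le_mul_of_nonneg_right this (exp_pos _).le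

theorem add_le_mul_exp_add_exp (h : IsConeDichotomy S c X Y X' Y') (hS : Convex ℝ S) {M u : ℝ}
    (hX : ∀ t ∈ S, 0 ≤ X t) (hY : ∀ t ∈ S, 0 ≤ Y t) (hM : ∀ t ∈ S, X t + Y t ≤ M)
    (h0 : 0 ∈ S) (ht : t ∈ S) (hu : u ∈ S) (h0t : 0 ≤ t) (htu : t ≤ u) :
    X t + Y t ≤ 2 * M * (exp (-c * t) + exp (-c * (u - t))) := by
  have hexp₁ := exp_pos (-c * t)
  have hexp₂ := exp_pos (-c * (u - t))
  have hM0 : 0 ≤ M := by linarith [hX 0 h0, hY 0 h0, hM 0 h0]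
  rcases le_total (X t) (Y t) with hXY | hYX
  · have hdecay := h.snd_le_mul_exp hS h0 ht h0t hXY
    rw [sub_zero] at hdecay
    have : Y 0 * exp (-c * t) ≤ M * exp (-c * t) :=
      mul_le_mul_of_nonneg_right (by linarith [hX 0 h0, hM 0 h0]) hexp₁.le
    nlinarith
  · have hgrowth := h.fst_le_mul_exp hS ht hu htu hYX
    have : X u * exp (-c * (u - t)) ≤ M * exp (-c * (u - t)) :=
      mul_le_mul_of_nonneg_right (by linarith [hY u hu, hM u hu]) hexp₂.le
    nlinarith

end IsConeDichotomy

theorem lintegral_Ici_ofReal_mul_exp_neg_mul {C κ : ℝ} (hC : 0 ≤ C) (hκ : 0 < κ) :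
    ∫⁻ t in Set.Ici 0, ENNReal.ofReal (C * exp (-κ * t)) = ENNReal.ofReal (C / κ) := by
  have hint : IntegrableOn (fun t => C * exp (-κ * t)) (Set.Ici 0) :=
    (integrableOn_Ici_iff_integrableOn_Ioi (by simp)).2
      ((integrableOn_exp_mul_Ioi (neg_lt_zero.2 hκ) 0).const_mul C)
  rw [← ofReal_integral_eq_lintegral_ofReal hint (ae_of_all _ fun t => by positivity),
    integral_Ici_eq_integral_Ioi, integral_const_mul, integral_exp_mul_Ioi (neg_lt_zero.2 hκ)]
  congr 1
  field_simp
  simp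

theorem lintegral_Iic_ofReal_mul_exp_mul_sub {C κ : ℝ} (hC : 0 ≤ C) (hκ : 0 < κ) (b : ℝ) :
    ∫⁻ t in Set.Iic b, ENNReal.ofReal (C * exp (κ * (t - b))) = ENNReal.ofReal (C / κ) := by
  have hsplit : ∀ t, C * exp (κ * (t - b)) = C / exp (κ * b) * exp (κ * t) := fun t => by
    rw [mul_sub, exp_sub]; ring
  simp_rw [hsplit]
  rw [← ofReal_integral_eq_lintegral_ofReal ((integrableOn_exp_mul_Iic hκ b).const_mul _)
    (ae_of_all _ fun t => by positivity), integral_const_mul, integral_exp_mul_Iic hκ]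
  congr 1
  field_simp

theorem tendsto_exp_mul_mul_of_le_exp {g : ℝ → ℝ} {C κ ν : ℝ} (hνκ : ν < κ)
    (hg0 : ∀ t, 0 ≤ g t) (hg : ∀ t, 0 ≤ t → g t ≤ C * exp (-κ * t)) :
    Tendsto (fun t => exp (ν * t) * g t) atTop (𝓝 0) := by
  have hlim : Tendsto (fun t => C * exp ((ν - κ) * t)) atTop (𝓝 0) := by
    simpa using ((tendsto_exp_atBot.comp
      (tendsto_id.const_mul_atTop_of_neg (sub_neg.2 hνκ))).const_mul C)
  refine squeeze_zero' (Eventually.of_forall fun t => mul_nonneg (exp_pos _).le (hg0 t)) ?_ hlim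
  filter_upwards [eventually_ge_atTop 0] with t ht
  calc exp (ν * t) * g t ≤ exp (ν * t) * (C * exp (-κ * t)) :=
        mul_le_mul_of_nonneg_left (hg t ht) (exp_pos _).le
    _ = C * exp ((ν - κ) * t) := by rw [sub_mul, sub_eq_add_neg, exp_add]; ring_nf

theorem convex_setOf_nonneg_and_coe_lt (T₀ : EReal) :
    Convex ℝ {t : ℝ | 0 ≤ t ∧ (t : EReal) < T₀} :=
  Set.OrdConnected.convex
    ⟨fun _ hx _ hy _ hz => ⟨hx.1.trans hz.1, (EReal.coe_le_coe_iff.2 hz.2).trans_lt hy.2⟩⟩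

theorem lintegral_le_of_le_exp_add_exp {g : ℝ → ℝ} {T₀ : EReal} {C κ : ℝ} (hC : 0 ≤ C)
    (hκ : 0 < κ) (hg : ∀ t u : ℝ, 0 ≤ t → t ≤ u → (u : EReal) < T₀ →
      g t ≤ C * (exp (-κ * t) + exp (-κ * (u - t)))) :
    ∫⁻ t in {t : ℝ | 0 ≤ t ∧ (t : EReal) < T₀}, ENNReal.ofReal (g t)
      ≤ ENNReal.ofReal (3 * C / κ) := by
  induction T₀ using EReal.rec with
  | bot => simp
  | coe b =>
    simp only [EReal.coe_lt_coe_iff] at hg ⊢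
    have hpoint : ∀ t ∈ {t : ℝ | 0 ≤ t ∧ t < b}, ENNReal.ofReal (g t)
        ≤ ENNReal.ofReal (C * exp (-κ * t)) + ENNReal.ofReal (C * exp (κ / 2 * (t - b))) := by
      rintro t ⟨h0t, htb⟩
      have hmid : -κ * ((t + b) / 2 - t) = κ / 2 * (t - b) := by ring
      have := hg t ((t + b) / 2) h0t (by linarith) (by linarith)
      rw [hmid, mul_add] at this
      exact (ENNReal.ofReal_le_ofReal this).trans ENNReal.ofReal_add_le
    calc ∫⁻ t in {t : ℝ | 0 ≤ t ∧ t < b}, ENNReal.ofReal (g t)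
        ≤ ∫⁻ t in {t : ℝ | 0 ≤ t ∧ t < b},
            (ENNReal.ofReal (C * exp (-κ * t)) + ENNReal.ofReal (C * exp (κ / 2 * (t - b)))) :=
          setLIntegral_mono (by fun_prop) hpoint
      _ = (∫⁻ t in {t : ℝ | 0 ≤ t ∧ t < b}, ENNReal.ofReal (C * exp (-κ * t)))
            + ∫⁻ t in {t : ℝ | 0 ≤ t ∧ t < b}, ENNReal.ofReal (C * exp (κ / 2 * (t - b))) :=
          lintegral_add_left (Measurable.ennreal_ofReal (by fun_prop)) _
      _ ≤ (∫⁻ t in Set.Ici 0, ENNReal.ofReal (C * exp (-κ * t)))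
            + ∫⁻ t in Set.Iic b, ENNReal.ofReal (C * exp (κ / 2 * (t - b))) :=
          add_le_add (lintegral_mono_set fun t ht => ht.1)
            (lintegral_mono_set fun t ht => ht.2.le)
      _ = ENNReal.ofReal (3 * C / κ) := by
        rw [lintegral_Ici_ofReal_mul_exp_neg_mul hC hκ,
          lintegral_Iic_ofReal_mul_exp_mul_sub hC (half_pos hκ),
          ← ENNReal.ofReal_add (by positivity) (by positivity)]
        congr 1
        field_simp
        ring
  | top =>
    have hpoint : ∀ t ∈ {t : ℝ | 0 ≤ t ∧ (t : EReal) < ⊤},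
        ENNReal.ofReal (g t) ≤ ENNReal.ofReal (2 * C * exp (-κ * t)) := by
      rintro t ⟨h0t, -⟩
      have := hg t (2 * t) h0t (by linarith) (EReal.coe_lt_top _)
      rw [show 2 * t - t = t by ring] at this
      exact ENNReal.ofReal_le_ofReal (by linarith)
    calc ∫⁻ t in {t : ℝ | 0 ≤ t ∧ (t : EReal) < ⊤}, ENNReal.ofReal (g t)
        ≤ ∫⁻ t in {t : ℝ | 0 ≤ t ∧ (t : EReal) < ⊤}, ENNReal.ofReal (2 * C * exp (-κ * t)) :=
          setLIntegral_mono (by fun_prop) hpoint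
      _ ≤ ∫⁻ t in Set.Ici 0, ENNReal.ofReal (2 * C * exp (-κ * t)) :=
          lintegral_mono_set fun t ht => ht.1
      _ = ENNReal.ofReal (2 * C / κ) := lintegral_Ici_ofReal_mul_exp_neg_mul (by positivity) hκ
      _ ≤ ENNReal.ofReal (3 * C / κ) := ENNReal.ofReal_le_ofReal (by gcongr; norm_num)

/-- For `σ = 1` and `σ = -1` these are the quantities `X = Σ ξ_j²` and `Y = Σ η_j²`. -/
def signedEnergy {p : ℕ} (omg : Fin p → ℝ) (α β : Fin p → ℝ → ℝ) (σ t : ℝ) : ℝ :=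
  ∑ j, (omg j * α j t + σ * β j t) ^ 2

def signedEnergyDeriv {p : ℕ} (omg : Fin p → ℝ) (α β α' β' : Fin p → ℝ → ℝ) (σ t : ℝ) : ℝ :=
  ∑ j, 2 * (omg j * α j t + σ * β j t) * (omg j * α' j t + σ * β' j t)

section ApproxSolution

variable {p : ℕ} {omg : Fin p → ℝ} {α β α' β' : Fin p → ℝ → ℝ} {σ t : ℝ}

theorem gam_nonneg : 0 ≤ gam omg α β t := sqrt_nonneg _

theorem sq_gam : gam omg α β t ^ 2 = ∑ j, (omg j ^ 2 * α j t ^ 2 + β j t ^ 2) :=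
  sq_sqrt (Finset.sum_nonneg fun _ _ => by positivity)

theorem signedEnergy_nonneg : 0 ≤ signedEnergy omg α β σ t :=
  Finset.sum_nonneg fun _ _ => sq_nonneg _

theorem signedEnergy_one_add_signedEnergy_neg_one :
    signedEnergy omg α β 1 t + signedEnergy omg α β (-1) t = 2 * gam omg α β t ^ 2 := by
  rw [sq_gam, signedEnergy, signedEnergy, ← Finset.sum_add_distrib, Finset.mul_sum]
  exact Finset.sum_congr rfl fun j _ => by ring

theorem abs_mul_add_le_two_mul_gam (hσ : |σ| = 1) (j : Fin p) :
    |omg j * α j t + σ * β j t| ≤ 2 * gam omg α β t := by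
  have hj : omg j ^ 2 * α j t ^ 2 + β j t ^ 2 ≤ gam omg α β t ^ 2 := sq_gam ▸
    Finset.single_le_sum (f := fun i => omg i ^ 2 * α i t ^ 2 + β i t ^ 2)
      (fun _ _ => by positivity) (Finset.mem_univ j)
  have hσβ : (σ * β j t) ^ 2 = β j t ^ 2 := by rw [mul_pow, ← sq_abs σ, hσ, one_pow, one_mul]
  refine abs_le_of_sq_le_sq ?_ (mul_nonneg zero_le_two gam_nonneg)
  nlinarith [sq_nonneg (omg j * α j t - σ * β j t), sq_nonneg (gam omg α β t)]

theorem hasDerivWithinAt_signedEnergy {s : Set ℝ}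
    (hα : ∀ j, HasDerivWithinAt (α j) (α' j t) s t)
    (hβ : ∀ j, HasDerivWithinAt (β j) (β' j t) s t) :
    HasDerivWithinAt (signedEnergy omg α β σ) (signedEnergyDeriv omg α β α' β' σ t) s t :=
  HasDerivWithinAt.fun_sum fun j _ =>
    ((((hα j).const_mul (omg j)).fun_add ((hβ j).const_mul σ)).fun_pow 2).congr_deriv (by ring)

theorem le_mul_deriv_signedEnergy {ε ω₁ : ℝ} (hσ : |σ| = 1) (hω₁ : 0 ≤ ω₁)
    (hω : ∀ j, ω₁ ≤ omg j) (ha : ∀ j, |α' j t - β j t| ≤ ε * gam omg α β t)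
    (hb : ∀ j, |β' j t - omg j ^ 2 * α j t| ≤ ε * gam omg α β t) :
    2 * ω₁ * signedEnergy omg α β σ t - 4 * ε * (∑ j, (omg j + 1)) * gam omg α β t ^ 2
      ≤ σ * signedEnergyDeriv omg α β α' β' σ t := by
  have hσ2 : σ ^ 2 = 1 := by rw [← sq_abs, hσ, one_pow]
  set γ := gam omg α β t
  have hterm : ∀ j, 2 * ω₁ * (omg j * α j t + σ * β j t) ^ 2 - 4 * ε * (omg j + 1) * γ ^ 2
      ≤ σ * (2 * (omg j * α j t + σ * β j t) * (omg j * α' j t + σ * β' j t)) := by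
    intro j
    set ξ := omg j * α j t + σ * β j t
    set e := omg j * (α' j t - β j t) + σ * (β' j t - omg j ^ 2 * α j t)
    have hωj : 0 ≤ omg j := hω₁.trans (hω j)
    -- the defect `e` measures how far `ξ` is from solving `ξ' = σ ω_j ξ`
    have hsplit : omg j * α' j t + σ * β' j t = σ * omg j * ξ + e := by
      linear_combination (-(omg j * β j t)) * hσ2
    have he : |e| ≤ (omg j + 1) * (ε * γ) := calc
      |e| ≤ |omg j * (α' j t - β j t)| + |σ * (β' j t - omg j ^ 2 * α j t)| := abs_add_le _ _
      _ = omg j * |α' j t - β j t| + |β' j t - omg j ^ 2 * α j t| := by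
        rw [abs_mul, abs_mul, abs_of_nonneg hωj, hσ, one_mul]
      _ ≤ omg j * (ε * γ) + ε * γ := add_le_add (mul_le_mul_of_nonneg_left (ha j) hωj) (hb j)
      _ = (omg j + 1) * (ε * γ) := by ring
    have hξe : -(2 * γ * ((omg j + 1) * (ε * γ))) ≤ σ * ξ * e := by
      refine neg_le_of_abs_le ?_
      rw [abs_mul, abs_mul, hσ, one_mul]
      exact mul_le_mul (abs_mul_add_le_two_mul_gam hσ j) he (abs_nonneg _)
        (mul_nonneg zero_le_two gam_nonneg)
    have hexpand : σ * (2 * ξ * (σ * omg j * ξ + e)) = 2 * omg j * ξ ^ 2 + 2 * (σ * ξ * e) := by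
      linear_combination (2 * omg j * ξ ^ 2) * hσ2
    rw [hsplit, hexpand]
    nlinarith [mul_le_mul_of_nonneg_right (hω j) (sq_nonneg ξ)]
  calc 2 * ω₁ * signedEnergy omg α β σ t - 4 * ε * (∑ j, (omg j + 1)) * γ ^ 2
      = ∑ j, (2 * ω₁ * (omg j * α j t + σ * β j t) ^ 2 - 4 * ε * (omg j + 1) * γ ^ 2) := by
        simp only [signedEnergy, Finset.sum_sub_distrib, Finset.mul_sum, Finset.sum_mul]
    _ ≤ _ := (Finset.sum_le_sum fun j _ => hterm j).trans_eq (Finset.mul_sum _ _ _).symm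

theorem gam_le_two_mul_exp_add_exp {S : Set ℝ} {ε ω₁ G u : ℝ} (hS : Convex ℝ S) (h0 : 0 ∈ S)
    (hω₁ : 0 ≤ ω₁) (hω : ∀ j, ω₁ ≤ omg j) (hε : 8 * ε * ∑ j, (omg j + 1) ≤ ω₁)
    (hα : ∀ j, ∀ t ∈ S, HasDerivWithinAt (α j) (α' j t) S t)
    (hβ : ∀ j, ∀ t ∈ S, HasDerivWithinAt (β j) (β' j t) S t)
    (ha : ∀ j, ∀ t ∈ S, |α' j t - β j t| ≤ ε * gam omg α β t)
    (hb : ∀ j, ∀ t ∈ S, |β' j t - omg j ^ 2 * α j t| ≤ ε * gam omg α β t)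
    (hG : ∀ t ∈ S, gam omg α β t ≤ G) (ht : t ∈ S) (hu : u ∈ S) (h0t : 0 ≤ t) (htu : t ≤ u) :
    gam omg α β t ≤ 2 * G * (exp (-(3 * ω₁ / 4) * t) + exp (-(3 * ω₁ / 4) * (u - t))) := by
  have hXY : ∀ t, signedEnergy omg α β 1 t + signedEnergy omg α β (-1) t
      = 2 * gam omg α β t ^ 2 := fun t => signedEnergy_one_add_signedEnergy_neg_one
  have hpert : ∀ t, 4 * ε * (∑ j, (omg j + 1)) * gam omg α β t ^ 2
      ≤ ω₁ / 4 * (signedEnergy omg α β 1 t + signedEnergy omg α β (-1) t) := fun t => by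
    rw [hXY]
    nlinarith [mul_le_mul_of_nonneg_right hε (sq_nonneg (gam omg α β t))]
  have hcone := IsConeDichotomy.of_le_deriv (S := S) (a := 2 * ω₁) (δ := ω₁ / 4)
    (X := signedEnergy omg α β 1) (Y := signedEnergy omg α β (-1)) (by positivity) (by linarith)
    (fun t ht => hasDerivWithinAt_signedEnergy (σ := 1) (fun j => hα j t ht) (fun j => hβ j t ht))
    (fun t ht => hasDerivWithinAt_signedEnergy (σ := -1) (fun j => hα j t ht) (fun j => hβ j t ht))
    (fun _ _ => signedEnergy_nonneg)
    (fun t ht => by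
      linarith [hpert t, le_mul_deriv_signedEnergy (σ := 1) (by simp) hω₁ hω
        (fun j => ha j t ht) (fun j => hb j t ht)])
    (fun t ht => by
      linarith [hpert t, le_mul_deriv_signedEnergy (σ := -1) (by simp) hω₁ hω
        (fun j => ha j t ht) (fun j => hb j t ht)])
  have hG0 : 0 ≤ G := gam_nonneg.trans (hG 0 h0)
  have hsq := hcone.add_le_mul_exp_add_exp hS (M := 2 * G ^ 2) (fun _ _ => signedEnergy_nonneg)
    (fun _ _ => signedEnergy_nonneg)
    (fun t ht => by rw [hXY]; gcongr; exacts [gam_nonneg, hG t ht]) h0 ht hu h0t htu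
  have hexp : ∀ x, exp (-(2 * ω₁ - 2 * (ω₁ / 4)) * x) = exp (-(3 * ω₁ / 4) * x) ^ 2 := fun x => by
    rw [sq, ← exp_add]; ring_nf
  rw [hXY, hexp, hexp] at hsq
  refine (pow_le_pow_iff_left₀ gam_nonneg (by positivity) two_ne_zero).1 ?_
  nlinarith [mul_nonneg (mul_nonneg hG0 hG0)
    (mul_nonneg (exp_pos (-(3 * ω₁ / 4) * t)).le (exp_pos (-(3 * ω₁ / 4) * (u - t))).le)]

end ApproxSolution

/-- Exponential dichotomy for approximate solutions of the linear
system `α_j' = β_j`, `β_j' = ω_j² α_j`: if the errors are at most `ε₃ γ(t)` and `γ` is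
bounded, then `∫₀^{T₀} γ ≤ C₃ ‖γ‖_∞`, and if `T₀ = ∞` then `e^{ω₁ t/2} γ(t) → 0`. -/
theorem ode_exponential_dichotomy {p : ℕ} (hp : 0 < p) (omg : Fin p → ℝ)
    (hpos : ∀ j, 0 < omg j) (hmono : StrictMono omg) :
    ∃ ε₃ C₃ : ℝ, 0 < ε₃ ∧ 0 < C₃ ∧
      ∀ T₀ : EReal, 0 < T₀ →
      ∀ α β α' β' : Fin p → ℝ → ℝ,
      (∀ (j : Fin p) (t : ℝ), 0 ≤ t → (t : EReal) < T₀ →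
        HasDerivWithinAt (α j) (α' j t) (Set.Ici 0) t ∧
        HasDerivWithinAt (β j) (β' j t) (Set.Ici 0) t) →
      (∀ j : Fin p,
        ContinuousOn (α' j) {t : ℝ | 0 ≤ t ∧ (t : EReal) < T₀} ∧
        ContinuousOn (β' j) {t : ℝ | 0 ≤ t ∧ (t : EReal) < T₀}) →
      ∀ G : ℝ, (∀ t : ℝ, 0 ≤ t → (t : EReal) < T₀ → gam omg α β t ≤ G) →
      (∀ (j : Fin p) (t : ℝ), 0 ≤ t → (t : EReal) < T₀ →
        |α' j t - β j t| ≤ ε₃ * gam omg α β t) →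
      (∀ (j : Fin p) (t : ℝ), 0 ≤ t → (t : EReal) < T₀ →
        |β' j t - (omg j) ^ 2 * α j t| ≤ ε₃ * gam omg α β t) →
      (∫⁻ t in {t : ℝ | 0 ≤ t ∧ (t : EReal) < T₀}, ENNReal.ofReal (gam omg α β t))
          ≤ ENNReal.ofReal (C₃ * G) ∧
        (T₀ = ⊤ →
          Tendsto (fun t : ℝ => Real.exp (omg ⟨0, hp⟩ / 2 * t) * gam omg α β t)
            atTop (nhds 0)) := by
  set ω₁ := omg ⟨0, hp⟩
  have hω₁ : 0 < ω₁ := hpos _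
  have hω : ∀ j, ω₁ ≤ omg j := fun j => hmono.monotone (Fin.le_def.2 (Nat.zero_le _))
  have hsum : 0 < ∑ j, (omg j + 1) :=
    Finset.sum_pos (fun j _ => by linarith [hpos j]) ⟨⟨0, hp⟩, Finset.mem_univ _⟩
  refine ⟨ω₁ / (8 * ∑ j, (omg j + 1)), 8 / ω₁, by positivity, by positivity, ?_⟩
  intro T₀ hT₀ α β α' β' hd _ G hG ha hb
  have hG0 : 0 ≤ G := gam_nonneg.trans (hG 0 le_rfl hT₀)
  have hbound : ∀ t u : ℝ, 0 ≤ t → t ≤ u → (u : EReal) < T₀ → gam omg α β t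
      ≤ 2 * G * (exp (-(3 * ω₁ / 4) * t) + exp (-(3 * ω₁ / 4) * (u - t))) :=
    fun t u h0t htu huT => gam_le_two_mul_exp_add_exp (convex_setOf_nonneg_and_coe_lt T₀)
      ⟨le_rfl, hT₀⟩ hω₁.le hω (le_of_eq (by field_simp))
      (fun j t ht => ((hd j t ht.1 ht.2).1.mono fun _ hx => hx.1))
      (fun j t ht => ((hd j t ht.1 ht.2).2.mono fun _ hx => hx.1))
      (fun j t ht => ha j t ht.1 ht.2) (fun j t ht => hb j t ht.1 ht.2)
      (fun t ht => hG t ht.1 ht.2)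
      ⟨h0t, (EReal.coe_le_coe_iff.2 htu).trans_lt huT⟩ ⟨h0t.trans htu, huT⟩ h0t htu
  refine ⟨(lintegral_le_of_le_exp_add_exp (by positivity) (by positivity) hbound).trans_eq ?_,
    fun hT => tendsto_exp_mul_mul_of_le_exp (C := 4 * G) (κ := 3 * ω₁ / 4) (by linarith)
      (fun _ => gam_nonneg) fun t ht => ?_⟩
  · congr 1
    field_simp
    ring
  · have := hbound t (2 * t) ht (by linarith) (hT ▸ EReal.coe_lt_top _)
    rw [show 2 * t - t = t by ring] at this
    linarith

end
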